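/- Let ε₁, ε₂ ∈ [0, 1/2) and suppose (1 − H(ε₁))/2 ≥ 1 − H(ε₂). Then the maximum over p ∈ [0,1] of min( (1 − H(ε₁))·(1 − p) , H(ε₂·(1 − 2p) + p) − H(ε₂) ) equals 1 − H(ε₂), and is attained at p = 1/2. Here H denotes the binary entropy function H(x) = −x·log₂(x) − (1 − x)·log₂(1 − x) for x ∈ [0,1], with the convention 0·log₂0 = 0. -/

import Mathlib

/-- The binary entropy function `H(x) = −x·log₂ x − (1 − x)·log₂(1 − x)`
(with the convention `0·log₂ 0 = 0`, automatic since `Real.logb 2 0 = 0`). -/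
noncomputable def binEnt (x : ℝ) : ℝ :=
  -(x * Real.logb 2 x) - (1 - x) * Real.logb 2 (1 - x)

lemma binEnt_eq_binEntropy_div_log_two (x : ℝ) : binEnt x = Real.binEntropy x / Real.log 2 := by
  simp only [binEnt, Real.binEntropy, Real.logb, Real.log_inv]
  ring

lemma binEnt_le_one (x : ℝ) : binEnt x ≤ 1 := by
  rw [binEnt_eq_binEntropy_div_log_two, div_le_one (Real.log_pos one_lt_two)]
  exact Real.binEntropy_le_log_two

lemma binEnt_half : binEnt (1 / 2) = 1 := by
  rw [binEnt_eq_binEntropy_div_log_two, one_div, Real.binEntropy_two_inv,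
    div_self (Real.log_pos one_lt_two).ne']

theorem stmt_9_general (ε₁ ε₂ : ℝ)
    (hcond : (1 - binEnt ε₁) / 2 ≥ 1 - binEnt ε₂) :
    (∀ p ∈ Set.Icc (0 : ℝ) 1,
        min ((1 - binEnt ε₁) * (1 - p)) (binEnt (ε₂ * (1 - 2 * p) + p) - binEnt ε₂) ≤
          1 - binEnt ε₂) ∧
      min ((1 - binEnt ε₁) * (1 - (1 / 2 : ℝ)))
          (binEnt (ε₂ * (1 - 2 * (1 / 2 : ℝ)) + 1 / 2) - binEnt ε₂) =
        1 - binEnt ε₂ := by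
  refine ⟨fun p _ => ?_, ?_⟩
  · calc _ ≤ binEnt (ε₂ * (1 - 2 * p) + p) - binEnt ε₂ := min_le_right _ _
      _ ≤ 1 - binEnt ε₂ := by linarith [binEnt_le_one (ε₂ * (1 - 2 * p) + p)]
  · have hmid : ε₂ * (1 - 2 * (1 / 2 : ℝ)) + 1 / 2 = 1 / 2 := by ring
    rw [hmid, binEnt_half]
    exact min_eq_right (by linarith)

/-- Second case of Corollary 1: for BSC links with crossover probabilities
`ε₁, ε₂ ∈ [0,1/2)`, if `(1 − H(ε₁))/2 ≥ 1 − H(ε₂)`, then the maximum over `p ∈ [0,1]`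
of `min((1 − H(ε₁))·(1 − p), H(ε₂·(1 − 2p) + p) − H(ε₂))` equals `1 − H(ε₂)`,
attained at `p = 1/2`. -/
theorem stmt_9 (ε₁ ε₂ : ℝ) (hε₁ : ε₁ ∈ Set.Ico (0 : ℝ) (1 / 2))
    (hε₂ : ε₂ ∈ Set.Ico (0 : ℝ) (1 / 2))
    (hcond : (1 - binEnt ε₁) / 2 ≥ 1 - binEnt ε₂) :
    (∀ p ∈ Set.Icc (0 : ℝ) 1,
        min ((1 - binEnt ε₁) * (1 - p)) (binEnt (ε₂ * (1 - 2 * p) + p) - binEnt ε₂) ≤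
          1 - binEnt ε₂) ∧
      min ((1 - binEnt ε₁) * (1 - (1 / 2 : ℝ)))
          (binEnt (ε₂ * (1 - 2 * (1 / 2 : ℝ)) + 1 / 2) - binEnt ε₂) =
        1 - binEnt ε₂ :=
  stmt_9_general ε₁ ε₂ hcond
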